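/- Let f : ℝ → ℝ be defined by f(x) = 10^{−2k−1} when 10^k ≤ x < 10^{k+1} for some k ∈ ℕ, and f(x) = 0 when x < 1. Then for every k ∈ ℕ: (a) if 10^k ≤ y < 10^{k+1}/2, then H_f(y) = y/2 > 0; and (b) if 10^{k+1}/2 ≤ y < 10^{k+1}, then H_f(y) = −(24/51)·y < 0. -/
import Mathlib


/-- The halving-only expected-benefit formula. -/
noncomputable def Hf (f : ℝ → ℝ) (y : ℝ) : ℝ :=
  (-y * f y + 4 * y * f (2 * y)) / (2 * f y + 4 * f (2 * y))

/-- Brams–Kilgour extreme-values example: for the piecewise-constant density equal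
to `10^(-2k-1)` on each `[10^k, 10^(k+1))` and vanishing below `1`, under the
halving-only process the expected benefit is `y/2 > 0` for
`10^k ≤ y < 10^(k+1)/2` and `-(24/51)y < 0` for `10^(k+1)/2 ≤ y < 10^(k+1)`. -/
theorem extreme_values_switch (f : ℝ → ℝ)
    (hf : ∀ (k : ℕ) (x : ℝ), (10 : ℝ) ^ k ≤ x → x < 10 ^ (k + 1) →
      f x = ((10 : ℝ) ^ (2 * k + 1))⁻¹)
    (hf0 : ∀ x : ℝ, x < 1 → f x = 0) :
    ∀ (k : ℕ) (y : ℝ),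
      ((10 : ℝ) ^ k ≤ y → y < 10 ^ (k + 1) / 2 → Hf f y = y / 2 ∧ 0 < Hf f y) ∧
      ((10 : ℝ) ^ (k + 1) / 2 ≤ y → y < 10 ^ (k + 1) →
        Hf f y = -(24 / 51) * y ∧ Hf f y < 0) := by
  intro k y
  have hpk : (0 : ℝ) < 10 ^ k := by positivity
  have ha : (0 : ℝ) < ((10 : ℝ) ^ (2 * k + 1))⁻¹ := by positivity
  constructor
  · intro h1 h2
    have hy0 : 0 < y := lt_of_lt_of_le hpk h1
    have hfy : f y = ((10 : ℝ) ^ (2 * k + 1))⁻¹ := by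
      apply hf k y h1
      calc y < 10 ^ (k + 1) / 2 := h2
        _ ≤ 10 ^ (k + 1) := by nlinarith [pow_pos (by norm_num : (0:ℝ) < 10) (k+1)]
    have hf2y : f (2 * y) = ((10 : ℝ) ^ (2 * k + 1))⁻¹ := by
      apply hf k (2 * y)
      · linarith
      · linarith
    have hH : Hf f y = y / 2 := by
      simp only [Hf, hfy, hf2y]
      field_simp
      ring
    exact ⟨hH, by rw [hH]; positivity⟩
  · intro h1 h2
    have hpk1 : (0 : ℝ) < 10 ^ (k + 1) := by positivity
    have hy0 : 0 < y := by linarith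
    have hfy : f y = ((10 : ℝ) ^ (2 * k + 1))⁻¹ := by
      apply hf k y _ h2
      have : (10 : ℝ) ^ k ≤ 10 ^ (k + 1) / 2 := by
        rw [pow_succ]; nlinarith
      linarith
    have hf2y : f (2 * y) = ((10 : ℝ) ^ (2 * (k + 1) + 1))⁻¹ := by
      apply hf (k + 1) (2 * y)
      · linarith
      · have : (10 : ℝ) ^ (k + 1 + 1) = 10 * 10 ^ (k + 1) := by ring
        rw [this]; linarith
    have hkey : ((10 : ℝ) ^ (2 * (k + 1) + 1))⁻¹ = ((10 : ℝ) ^ (2 * k + 1))⁻¹ / 100 := by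
      rw [show 2 * (k + 1) + 1 = (2 * k + 1) + 2 by ring, pow_add]
      rw [mul_inv]
      norm_num
      ring
    have hH : Hf f y = -(24 / 51) * y := by
      simp only [Hf, hfy, hf2y, hkey]
      field_simp
      ring
    exact ⟨hH, by rw [hH]; nlinarith⟩
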